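/- Let I be a one-to-one matching market instance in which every choice function is substitutable and consistent, and let S be its set of stable matchings ordered by ⪰. Then the lattice (S, ⪰) is distributive: for all μ₁, μ₂, μ₃ ∈ S, if a is a least upper bound of μ₂ and μ₃ in (S, ⪰), b is a greatest lower bound of μ₁ and a, c is a greatest lower bound of μ₁ and μ₂, d is a greatest lower bound of μ₁ and μ₃, and e is a least upper bound of c and d, then b = e. -/

import Mathlib

open Finset

/-- A choice function is substitutable if `a ∈ C S` implies `a ∈ C (T ∪ {a})`
for every `T ⊆ S`. -/
def Substitutable {α : Type*} [DecidableEq α] (C : Finset α → Finset α) : Prop :=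
  ∀ (S T : Finset α) (a : α), T ⊆ S → a ∈ C S → a ∈ C (insert a T)

/-- A choice function is consistent if `C S ⊆ T ⊆ S` implies `C T = C S`. -/
def Consistent {α : Type*} (C : Finset α → Finset α) : Prop :=
  ∀ (S T : Finset α), C S ⊆ T → T ⊆ S → C T = C S

/-- The set of workers matched to firm `f` in the matching `μ`. -/
def matchedW {F W : Type*} [DecidableEq F] [DecidableEq W]
    (μ : Finset (F × W)) (f : F) : Finset W :=
  (μ.filter fun p => p.1 = f).image Prod.snd

/-- The set of firms matched to worker `w` in the matching `μ`. -/
def matchedF {F W : Type*} [DecidableEq F] [DecidableEq W]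
    (μ : Finset (F × W)) (w : W) : Finset F :=
  (μ.filter fun p => p.2 = w).image Prod.fst

/-- A matching is stable if it is individually rational and has no blocking pair. -/
def IsStable {F W : Type*} [DecidableEq F] [DecidableEq W]
    (Cf : F → Finset W → Finset W) (Cw : W → Finset F → Finset F)
    (μ : Finset (F × W)) : Prop :=
  (∀ f, Cf f (matchedW μ f) = matchedW μ f) ∧
  (∀ w, Cw w (matchedF μ w) = matchedF μ w) ∧
  (∀ f w, (f, w) ∉ μ →
    ¬ (f ∈ Cw w (insert f (matchedF μ w)) ∧ w ∈ Cf f (insert w (matchedW μ f))))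

/-- The firm (partial) order on matchings: `μ ⪰ μ'` iff
`C_f(μ(f) ∪ μ'(f)) = μ(f)` for every firm `f`. -/
def FirmGE {F W : Type*} [DecidableEq F] [DecidableEq W]
    (Cf : F → Finset W → Finset W) (μ μ' : Finset (F × W)) : Prop :=
  ∀ f, Cf f (matchedW μ f ∪ matchedW μ' f) = matchedW μ f

/-- `ν` is a least upper bound of `μ` and `μ'` among stable matchings,
with respect to the firm order. -/
def IsStableLUB {F W : Type*} [DecidableEq F] [DecidableEq W]
    (Cf : F → Finset W → Finset W) (Cw : W → Finset F → Finset F)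
    (ν μ μ' : Finset (F × W)) : Prop :=
  IsStable Cf Cw ν ∧ FirmGE Cf ν μ ∧ FirmGE Cf ν μ' ∧
  ∀ l, IsStable Cf Cw l → FirmGE Cf l μ → FirmGE Cf l μ' → FirmGE Cf l ν

/-- `ν` is a greatest lower bound of `μ` and `μ'` among stable matchings,
with respect to the firm order. -/
def IsStableGLB {F W : Type*} [DecidableEq F] [DecidableEq W]
    (Cf : F → Finset W → Finset W) (Cw : W → Finset F → Finset F)
    (ν μ μ' : Finset (F × W)) : Prop :=
  IsStable Cf Cw ν ∧ FirmGE Cf μ ν ∧ FirmGE Cf μ' ν ∧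
  ∀ l, IsStable Cf Cw l → FirmGE Cf μ l → FirmGE Cf μ' l → FirmGE Cf ν l

/-!
The join of two stable matchings gives every firm its preferred partner. It is stable, and by
opposition of interests every worker gets its less preferred partner; that no worker loses its
partner is a counting argument. Exchanging the two sides, the meet gives every worker its
preferred partner. So at each worker both lattice operations are computed from the worker's
choice function alone, and distributivity becomes an identity between choices that follows from
path independence.
-/

namespace StableMatching

section Matching

variable {F W : Type*} {μ ν : Finset (F × W)}

def swap (μ : Finset (F × W)) : Finset (W × F) :=
  μ.map (Equiv.prodComm F W).toEmbedding

@[simp]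
lemma mem_swap {w : W} {f : F} : (w, f) ∈ swap μ ↔ (f, w) ∈ μ := by
  simp [swap]

@[simp]
lemma swap_swap (μ : Finset (F × W)) : swap (swap μ) = μ := by
  ext ⟨f, w⟩
  simp

variable [DecidableEq F] [DecidableEq W]

@[simp]
lemma mem_matchedW {f : F} {w : W} : w ∈ matchedW μ f ↔ (f, w) ∈ μ := by
  simp [matchedW]

@[simp]
lemma mem_matchedF {f : F} {w : W} : f ∈ matchedF μ w ↔ (f, w) ∈ μ := by
  simp [matchedF]

lemma ext_matchedW (h : ∀ f, matchedW μ f = matchedW ν f) : μ = ν := by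
  ext ⟨f, w⟩
  rw [← mem_matchedW, h, mem_matchedW]

lemma ext_matchedF (h : ∀ w, matchedF μ w = matchedF ν w) : μ = ν := by
  ext ⟨f, w⟩
  rw [← mem_matchedF, h, mem_matchedF]

@[simp]
lemma matchedW_swap {w : W} : matchedW (swap μ) w = matchedF μ w := by
  ext f
  simp

@[simp]
lemma matchedF_swap {f : F} : matchedF (swap μ) f = matchedW μ f := by
  ext w
  simp

lemma card_image_fst (h : ∀ f, (matchedW μ f).card ≤ 1) : (μ.image Prod.fst).card = μ.card :=
  card_image_of_injOn fun p hp _ hq hpq =>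
    Prod.ext hpq (card_le_one.1 (h p.1) _ (mem_matchedW.2 hp) _ (mem_matchedW.2 (hpq ▸ hq)))

lemma card_image_snd (h : ∀ w, (matchedF μ w).card ≤ 1) : (μ.image Prod.snd).card = μ.card :=
  card_image_of_injOn fun p hp _ hq hpq =>
    Prod.ext (card_le_one.1 (h p.2) _ (mem_matchedF.2 hp) _ (mem_matchedF.2 (hpq ▸ hq))) hpq

variable {Cf : F → Finset W → Finset W} {Cw : W → Finset F → Finset F}

lemma _root_.IsStable.swap (h : IsStable Cf Cw μ) : IsStable Cw Cf (swap μ) := by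
  obtain ⟨hf, hw, hblock⟩ := h
  refine ⟨by simpa using hw, by simpa using hf, fun w f hwf hwf' => ?_⟩
  exact hblock f w (by simpa using hwf) (by simpa [and_comm] using hwf')

end Matching

section Choice

variable {α : Type*} {C : Finset α → Finset α}

lemma choice_nonempty (hc : Consistent C) {x : α} {S : Finset α} (hx : C {x} = {x})
    (hxS : x ∈ S) : (C S).Nonempty := by
  rw [nonempty_iff_ne_empty]
  intro hS
  have := hc S {x} (by simp [hS]) (singleton_subset_iff.2 hxS)
  simp [hx, hS] at this

variable [DecidableEq α]

lemma choice_choice_union (hsub : ∀ S, C S ⊆ S) (hs : Substitutable C) (hc : Consistent C)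
    (A B : Finset α) : C (C A ∪ B) = C (A ∪ B) := by
  refine hc _ _ (fun x hx => ?_) (union_subset_union (hsub A) Subset.rfl)
  rcases mem_union.1 (hsub _ hx) with hA | hB
  · have := hs (A ∪ B) (A.erase x) x ((erase_subset _ _).trans subset_union_left) hx
    rw [insert_erase hA] at this
    exact mem_union_left _ this
  · exact mem_union_right _ hB

lemma choice_union_choice (hsub : ∀ S, C S ⊆ S) (hs : Substitutable C) (hc : Consistent C)
    (A B : Finset α) : C (A ∪ C B) = C (A ∪ B) := by
  rw [union_comm, choice_choice_union hsub hs hc, union_comm]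

def worse (C : Finset α → Finset α) (X Y : Finset α) : Finset α :=
  if C (X ∪ Y) = X then Y else X

lemma eq_worse_of_choice {X Y Z : Finset α} (hZ : Z = X ∨ Z = Y) (hX : C (X ∪ Z) = X)
    (hY : C (Y ∪ Z) = Y) : Z = worse C X Y := by
  unfold worse
  split_ifs with h
  · rcases hZ with rfl | rfl
    · rwa [union_comm, h] at hY
    · rfl
  · rcases hZ with rfl | rfl
    · rfl
    · exact absurd hX h

lemma choice_union_worse (hsub : ∀ S, C S ⊆ S) (hs : Substitutable C) (hc : Consistent C)
    {A B D : Finset α} (hBD : C (B ∪ D) = B ∨ C (B ∪ D) = D) :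
    C (A ∪ worse C B D) = worse C (C (A ∪ B)) (C (A ∪ D)) := by
  have hpi : C (C (A ∪ B) ∪ C (A ∪ D)) = C (A ∪ C (B ∪ D)) := by
    rw [choice_choice_union hsub hs hc, choice_union_choice hsub hs hc,
      choice_union_choice hsub hs hc]
    congr 1
    ext x
    simp only [mem_union]
    tauto
  unfold worse
  by_cases hB : C (B ∪ D) = B
  · rw [hB] at hpi
    rw [if_pos hB, if_pos hpi]
  · rw [hBD.resolve_left hB] at hpi
    rw [if_neg hB, hpi]
    split_ifs with h
    · exact h.symm
    · rfl

structure IsOneToOneChoice (C : Finset α → Finset α) : Prop where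
  subset : ∀ S, C S ⊆ S
  substitutable : Substitutable C
  consistent : Consistent C
  card_le_one : ∀ S, (C S).card ≤ 1

namespace IsOneToOneChoice

variable (hC : IsOneToOneChoice C)
include hC

lemma card_le_one_of_choice_eq {X : Finset α} (hX : C X = X) : X.card ≤ 1 :=
  hX ▸ hC.card_le_one X

lemma eq_singleton_of_choice_eq {X : Finset α} {x : α} (hX : C X = X) (hx : x ∈ X) :
    X = {x} :=
  eq_singleton_iff_unique_mem.2
    ⟨hx, fun y hy => Finset.card_le_one.1 (hC.card_le_one_of_choice_eq hX) y hy x hx⟩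

lemma choice_singleton {X : Finset α} {x : α} (hX : C X = X) (hx : x ∈ X) : C {x} = {x} := by
  rw [← hC.eq_singleton_of_choice_eq hX hx, hX]

lemma choice_union_eq_or {X Y : Finset α} (hX : C X = X) (hY : C Y = Y) :
    C (X ∪ Y) = X ∨ C (X ∪ Y) = Y := by
  rcases X.eq_empty_or_nonempty with rfl | ⟨x, hx⟩
  · simp [hY]
  obtain ⟨z, hz⟩ :=
    choice_nonempty hC.consistent (hC.choice_singleton hX hx) (mem_union_left Y hx)
  have hXY : C (X ∪ Y) = {z} := eq_singleton_iff_unique_mem.2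
    ⟨hz, fun y hy => Finset.card_le_one.1 (hC.card_le_one _) y hy z hz⟩
  rcases mem_union.1 (hC.subset _ hz) with hzX | hzY
  · exact Or.inl (hXY.trans (hC.eq_singleton_of_choice_eq hX hzX).symm)
  · exact Or.inr (hXY.trans (hC.eq_singleton_of_choice_eq hY hzY).symm)

end IsOneToOneChoice

end Choice

section Market

variable {F W : Type*} [DecidableEq F] [DecidableEq W]
  {Cf : F → Finset W → Finset W} {Cw : W → Finset F → Finset F} {μ ν : Finset (F × W)}

/-- If `f` prefers its `μ`-partner `w` to its `ν`-partner, then `w` prefers its `ν`-partner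
to `f`: otherwise `(f, w)` would block `ν`. -/
lemma choice_matchedF_union_eq_right (hF : ∀ f, IsOneToOneChoice (Cf f))
    (hW : ∀ w, IsOneToOneChoice (Cw w)) (hμ : ∀ w, Cw w (matchedF μ w) = matchedF μ w)
    (hν : IsStable Cf Cw ν) {f : F} {w : W} (hfμ : (f, w) ∈ μ) (hfν : (f, w) ∉ ν)
    (hfw : w ∈ Cf f (matchedW μ f ∪ matchedW ν f)) :
    Cw w (matchedF μ w ∪ matchedF ν w) = matchedF ν w := by
  have hμw : matchedF μ w = {f} := (hW w).eq_singleton_of_choice_eq (hμ w) (mem_matchedF.2 hfμ)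
  have hf : Cw w {f} = {f} := hμw ▸ hμ w
  have hwf : w ∈ Cf f (insert w (matchedW ν f)) :=
    (hF f).substitutable _ _ _ subset_union_right hfw
  have hfw' : f ∉ Cw w (insert f (matchedF ν w)) := fun h => hν.2.2 f w hfν ⟨h, hwf⟩
  rw [hμw, ← insert_eq]
  refine eq_of_subset_of_card_le (fun g hg => ?_) ?_
  · rcases mem_insert.1 ((hW w).subset _ hg) with rfl | hgν
    · exact absurd hg hfw'
    · exact hgν
  · exact ((hW w).card_le_one_of_choice_eq (hν.2.1 w)).trans
      (choice_nonempty (hW w).consistent hf (mem_insert_self f _)).card_pos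

/-- Opposition of interests. -/
lemma _root_.FirmGE.swap (hF : ∀ f, IsOneToOneChoice (Cf f)) (hW : ∀ w, IsOneToOneChoice (Cw w))
    (hμ : ∀ w, Cw w (matchedF μ w) = matchedF μ w) (hν : IsStable Cf Cw ν)
    (h : FirmGE Cf μ ν) : FirmGE Cw (swap ν) (swap μ) := by
  intro w
  simp only [matchedW_swap]
  rcases (matchedF μ w).eq_empty_or_nonempty with hempty | ⟨f, hf⟩
  · rw [hempty, union_empty, hν.2.1 w]
  by_cases hfν : (f, w) ∈ ν
  · have hμν : matchedF μ w = matchedF ν w := by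
      rw [(hW w).eq_singleton_of_choice_eq (hμ w) hf,
        (hW w).eq_singleton_of_choice_eq (hν.2.1 w) (mem_matchedF.2 hfν)]
    rw [hμν, union_self, hν.2.1 w]
  · rw [union_comm]
    refine choice_matchedF_union_eq_right hF hW hμ hν (mem_matchedF.1 hf) hfν ?_
    rw [h f]
    exact mem_matchedW.2 (mem_matchedF.1 hf)

lemma firmGE_swap_iff (hF : ∀ f, IsOneToOneChoice (Cf f)) (hW : ∀ w, IsOneToOneChoice (Cw w))
    (hμ : IsStable Cf Cw μ) (hν : IsStable Cf Cw ν) :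
    FirmGE Cw (swap ν) (swap μ) ↔ FirmGE Cf μ ν := by
  refine ⟨fun h => ?_, fun h => h.swap hF hW hμ.2.1 hν⟩
  simpa using h.swap hW hF (by simpa using hν.1) hμ.swap

lemma firmGE_antisymm (h : FirmGE Cf μ ν) (h' : FirmGE Cf ν μ) : μ = ν :=
  ext_matchedW fun f => by rw [← h f, union_comm, h' f]

def join (Cf : F → Finset W → Finset W) (μ ν : Finset (F × W)) : Finset (F × W) :=
  (μ ∪ ν).filter fun p => p.2 ∈ Cf p.1 (matchedW μ p.1 ∪ matchedW ν p.1)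

lemma mem_join {f : F} {w : W} :
    (f, w) ∈ join Cf μ ν ↔ (f, w) ∈ μ ∪ ν ∧ w ∈ Cf f (matchedW μ f ∪ matchedW ν f) := by
  simp [join]

lemma join_comm : join Cf μ ν = join Cf ν μ := by
  simp only [join, union_comm]

lemma matchedF_join_subset {w : W} :
    matchedF (join Cf μ ν) w ⊆ matchedF μ w ∪ matchedF ν w := fun f hf => by
  simpa using (mem_join.1 (mem_matchedF.1 hf)).1

lemma matchedW_join (hF : ∀ f, IsOneToOneChoice (Cf f)) (f : F) :
    matchedW (join Cf μ ν) f = Cf f (matchedW μ f ∪ matchedW ν f) := by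
  ext w
  rw [mem_matchedW, mem_join, and_iff_right_iff_imp]
  intro hw
  simpa using (hF f).subset _ hw

lemma firmGE_join_left (hF : ∀ f, IsOneToOneChoice (Cf f)) : FirmGE Cf (join Cf μ ν) μ := by
  intro f
  rw [matchedW_join hF, choice_choice_union (hF f).subset (hF f).substitutable (hF f).consistent,
    union_right_comm, union_self]

lemma firmGE_join_right (hF : ∀ f, IsOneToOneChoice (Cf f)) : FirmGE Cf (join Cf μ ν) ν :=
  join_comm (Cf := Cf) ▸ firmGE_join_left hF

lemma firmGE_join {l : Finset (F × W)} (hF : ∀ f, IsOneToOneChoice (Cf f))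
    (hμ : FirmGE Cf l μ) (hν : FirmGE Cf l ν) : FirmGE Cf l (join Cf μ ν) := by
  intro f
  have hpi := choice_choice_union (hF f).subset (hF f).substitutable (hF f).consistent
  rw [matchedW_join hF, choice_union_choice (hF f).subset (hF f).substitutable (hF f).consistent,
    ← union_assoc, ← hpi, hμ f, hν f]

lemma card_matchedF_join_le_one (hF : ∀ f, IsOneToOneChoice (Cf f))
    (hW : ∀ w, IsOneToOneChoice (Cw w)) (hμ : IsStable Cf Cw μ) (hν : IsStable Cf Cw ν)
    (w : W) : (matchedF (join Cf μ ν) w).card ≤ 1 := by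
  have hμ1 := (hW w).card_le_one_of_choice_eq (hμ.2.1 w)
  have hν1 := (hW w).card_le_one_of_choice_eq (hν.2.1 w)
  -- two distinct join partners of `w` would make `w` prefer each of them to the other
  have cross : ∀ f ∈ matchedF (join Cf μ ν) w, ∀ g ∈ matchedF (join Cf μ ν) w,
      f ∈ matchedF μ w → g ∈ matchedF ν w → f = g := by
    intro f hf g hg hfμ hgν
    by_contra hfg
    have hfν : (f, w) ∉ ν := fun h => hfg (card_le_one.1 hν1 f (mem_matchedF.2 h) g hgν)
    have hgμ : (g, w) ∉ μ := fun h => hfg (card_le_one.1 hμ1 f hfμ g (mem_matchedF.2 h))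
    have hνw := choice_matchedF_union_eq_right hF hW hμ.2.1 hν (mem_matchedF.1 hfμ) hfν
      (mem_join.1 (mem_matchedF.1 hf)).2
    have hμw := choice_matchedF_union_eq_right hF hW hν.2.1 hμ (mem_matchedF.1 hgν) hgμ
      (union_comm (matchedW μ g) _ ▸ (mem_join.1 (mem_matchedF.1 hg)).2)
    rw [union_comm, hνw] at hμw
    exact hfν (mem_matchedF.1 (hμw ▸ hfμ))
  refine card_le_one.2 fun f hf g hg => ?_
  rcases mem_union.1 (matchedF_join_subset hf) with hfμ | hfν <;>
    rcases mem_union.1 (matchedF_join_subset hg) with hgμ | hgν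
  · exact card_le_one.1 hμ1 f hfμ g hgμ
  · exact cross f hf g hg hfμ hgν
  · exact (cross g hg f hf hgμ hfν).symm
  · exact card_le_one.1 hν1 f hfν g hgν

lemma choice_matchedF_join (hF : ∀ f, IsOneToOneChoice (Cf f))
    (hW : ∀ w, IsOneToOneChoice (Cw w)) (hμ : IsStable Cf Cw μ) (hν : IsStable Cf Cw ν)
    (w : W) : Cw w (matchedF (join Cf μ ν) w) = matchedF (join Cf μ ν) w := by
  rcases (matchedF (join Cf μ ν) w).eq_empty_or_nonempty with hempty | ⟨f, hf⟩
  · rw [hempty]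
    exact subset_empty.1 ((hW w).subset ∅)
  rw [eq_singleton_iff_unique_mem.2 ⟨hf, fun g hg =>
    card_le_one.1 (card_matchedF_join_le_one hF hW hμ hν w) g hg f hf⟩]
  rcases mem_union.1 (matchedF_join_subset hf) with hfμ | hfν
  · exact (hW w).choice_singleton (hμ.2.1 w) hfμ
  · exact (hW w).choice_singleton (hν.2.1 w) hfν

/-- Workers matched in the join are matched in `μ` (they prefer `μ`), firms matched in `μ` are
matched in the join, and a matching has as many matched firms as matched workers. -/
lemma image_snd_join (hF : ∀ f, IsOneToOneChoice (Cf f)) (hW : ∀ w, IsOneToOneChoice (Cw w))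
    (hμ : IsStable Cf Cw μ) (hν : IsStable Cf Cw ν) :
    (join Cf μ ν).image Prod.snd = μ.image Prod.snd := by
  have hJw := choice_matchedF_join hF hW hμ hν
  have hworkers : (join Cf μ ν).image Prod.snd ⊆ μ.image Prod.snd := by
    simp only [subset_iff, mem_image, Prod.exists, exists_eq_right]
    rintro w ⟨f, hfw⟩
    have hpref := (firmGE_join_left hF).swap hF hW hJw hμ w
    simp only [matchedW_swap] at hpref
    obtain ⟨g, hg⟩ := choice_nonempty (hW w).consistent
      ((hW w).choice_singleton (hJw w) (mem_matchedF.2 hfw))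
      (mem_union_right _ (mem_matchedF.2 hfw))
    rw [hpref] at hg
    exact ⟨g, mem_matchedF.1 hg⟩
  have hfirms : μ.image Prod.fst ⊆ (join Cf μ ν).image Prod.fst := by
    simp only [subset_iff, mem_image, Prod.exists, exists_and_right, exists_eq_right]
    rintro f ⟨w, hfw⟩
    obtain ⟨w', hw'⟩ := choice_nonempty (hF f).consistent
      ((hF f).choice_singleton (hμ.1 f) (mem_matchedW.2 hfw))
      (mem_union_left _ (mem_matchedW.2 hfw))
    rw [← matchedW_join hF] at hw'
    exact ⟨w', mem_matchedW.1 hw'⟩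
  refine eq_of_subset_of_card_le hworkers ?_
  have hJf : ∀ f, (matchedW (join Cf μ ν) f).card ≤ 1 := fun f => by
    rw [matchedW_join hF]
    exact (hF f).card_le_one _
  calc (μ.image Prod.snd).card
      = (μ.image Prod.fst).card := by
        rw [card_image_snd fun w => (hW w).card_le_one_of_choice_eq (hμ.2.1 w),
          card_image_fst fun f => (hF f).card_le_one_of_choice_eq (hμ.1 f)]
    _ ≤ ((join Cf μ ν).image Prod.fst).card := card_le_card hfirms
    _ = ((join Cf μ ν).image Prod.snd).card := by
        rw [card_image_fst hJf, card_image_snd (card_matchedF_join_le_one hF hW hμ hν)]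

lemma matchedF_join_eq_or (hF : ∀ f, IsOneToOneChoice (Cf f))
    (hW : ∀ w, IsOneToOneChoice (Cw w)) (hμ : IsStable Cf Cw μ) (hν : IsStable Cf Cw ν)
    (w : W) :
    matchedF (join Cf μ ν) w = matchedF μ w ∨ matchedF (join Cf μ ν) w = matchedF ν w := by
  have hJ1 := card_matchedF_join_le_one hF hW hμ hν w
  rcases (matchedF (join Cf μ ν) w).eq_empty_or_nonempty with hempty | ⟨f, hf⟩
  · refine Or.inl (hempty.trans (eq_empty_iff_forall_notMem.2 fun g hg => ?_).symm)
    have hw : w ∈ (join Cf μ ν).image Prod.snd := by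
      rw [image_snd_join hF hW hμ hν]
      exact mem_image_of_mem Prod.snd (mem_matchedF.1 hg)
    obtain ⟨⟨g', w'⟩, hg'w, rfl⟩ := mem_image.1 hw
    simpa [hempty] using mem_matchedF.2 hg'w
  rcases mem_union.1 (matchedF_join_subset hf) with hfμ | hfν
  · exact Or.inl (eq_of_subset_of_card_le
      (fun g hg => card_le_one.1 hJ1 g hg f hf ▸ hfμ)
      ((hW w).card_le_one_of_choice_eq (hμ.2.1 w) |>.trans (card_pos.2 ⟨f, hf⟩)))
  · exact Or.inr (eq_of_subset_of_card_le
      (fun g hg => card_le_one.1 hJ1 g hg f hf ▸ hfν)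
      ((hW w).card_le_one_of_choice_eq (hν.2.1 w) |>.trans (card_pos.2 ⟨f, hf⟩)))

lemma isStable_join (hF : ∀ f, IsOneToOneChoice (Cf f)) (hW : ∀ w, IsOneToOneChoice (Cw w))
    (hμ : IsStable Cf Cw μ) (hν : IsStable Cf Cw ν) : IsStable Cf Cw (join Cf μ ν) := by
  refine ⟨fun f => ?_, choice_matchedF_join hF hW hμ hν, fun f w hfw ⟨hfJ, hwJ⟩ => ?_⟩
  · simpa [matchedW_join hF] using
      choice_choice_union (hF f).subset (hF f).substitutable (hF f).consistent _ ∅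
  rw [matchedW_join hF, insert_eq,
    choice_union_choice (hF f).subset (hF f).substitutable (hF f).consistent] at hwJ
  have hfw' : (f, w) ∉ μ ∪ ν := fun h => hfw <| mem_join.2 ⟨h, by
    rwa [union_eq_right.2 (singleton_subset_iff.2 (by simpa using h))] at hwJ⟩
  rw [notMem_union] at hfw'
  rcases matchedF_join_eq_or hF hW hμ hν w with h | h <;> rw [h] at hfJ
  · exact hμ.2.2 f w hfw'.1 ⟨hfJ, (hF f).substitutable _ _ _
      (subset_union_left.trans subset_union_right) hwJ⟩
  · exact hν.2.2 f w hfw'.2 ⟨hfJ, (hF f).substitutable _ _ _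
      (subset_union_right.trans subset_union_right) hwJ⟩

lemma matchedF_join (hF : ∀ f, IsOneToOneChoice (Cf f)) (hW : ∀ w, IsOneToOneChoice (Cw w))
    (hμ : IsStable Cf Cw μ) (hν : IsStable Cf Cw ν) (w : W) :
    matchedF (join Cf μ ν) w = worse (Cw w) (matchedF μ w) (matchedF ν w) := by
  have hJ := choice_matchedF_join hF hW hμ hν
  refine eq_worse_of_choice (matchedF_join_eq_or hF hW hμ hν w) ?_ ?_
  · simpa using (firmGE_join_left hF).swap hF hW hJ hμ w
  · simpa using (firmGE_join_right hF).swap hF hW hJ hν w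

lemma _root_.IsStableLUB.eq_join {a : Finset (F × W)} (hF : ∀ f, IsOneToOneChoice (Cf f))
    (hW : ∀ w, IsOneToOneChoice (Cw w)) (hμ : IsStable Cf Cw μ) (hν : IsStable Cf Cw ν)
    (ha : IsStableLUB Cf Cw a μ ν) : a = join Cf μ ν :=
  firmGE_antisymm (firmGE_join hF ha.2.1 ha.2.2.1)
    (ha.2.2.2 _ (isStable_join hF hW hμ hν) (firmGE_join_left hF) (firmGE_join_right hF))

lemma _root_.IsStableLUB.matchedW_eq {a : Finset (F × W)} (hF : ∀ f, IsOneToOneChoice (Cf f))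
    (hW : ∀ w, IsOneToOneChoice (Cw w)) (hμ : IsStable Cf Cw μ) (hν : IsStable Cf Cw ν)
    (ha : IsStableLUB Cf Cw a μ ν) (f : F) :
    matchedW a f = Cf f (matchedW μ f ∪ matchedW ν f) := by
  rw [ha.eq_join hF hW hμ hν, matchedW_join hF]

lemma _root_.IsStableLUB.matchedF_eq {a : Finset (F × W)} (hF : ∀ f, IsOneToOneChoice (Cf f))
    (hW : ∀ w, IsOneToOneChoice (Cw w)) (hμ : IsStable Cf Cw μ) (hν : IsStable Cf Cw ν)
    (ha : IsStableLUB Cf Cw a μ ν) (w : W) :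
    matchedF a w = worse (Cw w) (matchedF μ w) (matchedF ν w) := by
  rw [ha.eq_join hF hW hμ hν, matchedF_join hF hW hμ hν]

lemma _root_.IsStableGLB.swap {b : Finset (F × W)} (hF : ∀ f, IsOneToOneChoice (Cf f))
    (hW : ∀ w, IsOneToOneChoice (Cw w)) (hμ : IsStable Cf Cw μ) (hν : IsStable Cf Cw ν)
    (hb : IsStableGLB Cf Cw b μ ν) : IsStableLUB Cw Cf (swap b) (swap μ) (swap ν) := by
  obtain ⟨hb, hμb, hνb, hgreatest⟩ := hb
  refine ⟨hb.swap, (firmGE_swap_iff hF hW hμ hb).2 hμb, (firmGE_swap_iff hF hW hν hb).2 hνb,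
    fun l hl hlμ hlν => ?_⟩
  have hl' : IsStable Cf Cw (StableMatching.swap l) := by simpa using hl.swap
  rw [← swap_swap l] at hlμ hlν ⊢
  exact (firmGE_swap_iff hF hW hb hl').2 <| hgreatest _ hl'
    ((firmGE_swap_iff hF hW hμ hl').1 hlμ) ((firmGE_swap_iff hF hW hν hl').1 hlν)

lemma _root_.IsStableGLB.matchedF_eq {b : Finset (F × W)} (hF : ∀ f, IsOneToOneChoice (Cf f))
    (hW : ∀ w, IsOneToOneChoice (Cw w)) (hμ : IsStable Cf Cw μ) (hν : IsStable Cf Cw ν)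
    (hb : IsStableGLB Cf Cw b μ ν) (w : W) :
    matchedF b w = Cw w (matchedF μ w ∪ matchedF ν w) := by
  simpa using (hb.swap hF hW hμ hν).matchedW_eq hW hF hμ.swap hν.swap w

end Market

end StableMatching

theorem one_to_one_stable_matching_lattice_distributive_general
    {F W : Type*} [DecidableEq F] [DecidableEq W]
    (Cf : F → Finset W → Finset W) (Cw : W → Finset F → Finset F)
    (hfsub : ∀ f S, Cf f S ⊆ S) (hwsub : ∀ w S, Cw w S ⊆ S)
    (hfs : ∀ f, Substitutable (Cf f)) (hfc : ∀ f, Consistent (Cf f))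
    (hws : ∀ w, Substitutable (Cw w)) (hwc : ∀ w, Consistent (Cw w))
    (hone_f : ∀ f T, (Cf f T).card ≤ 1) (hone_w : ∀ w T, (Cw w T).card ≤ 1)
    (μ₁ μ₂ μ₃ a b c d e : Finset (F × W))
    (h₁ : IsStable Cf Cw μ₁) (h₂ : IsStable Cf Cw μ₂) (h₃ : IsStable Cf Cw μ₃)
    (ha : IsStableLUB Cf Cw a μ₂ μ₃)
    (hb : IsStableGLB Cf Cw b μ₁ a)
    (hc : IsStableGLB Cf Cw c μ₁ μ₂)
    (hd : IsStableGLB Cf Cw d μ₁ μ₃)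
    (he : IsStableLUB Cf Cw e c d) :
    b = e := by
  have hF f : StableMatching.IsOneToOneChoice (Cf f) := ⟨hfsub f, hfs f, hfc f, hone_f f⟩
  have hW w : StableMatching.IsOneToOneChoice (Cw w) := ⟨hwsub w, hws w, hwc w, hone_w w⟩
  refine StableMatching.ext_matchedF fun w => ?_
  rw [hb.matchedF_eq hF hW h₁ ha.1, ha.matchedF_eq hF hW h₂ h₃, he.matchedF_eq hF hW hc.1 hd.1,
    hc.matchedF_eq hF hW h₁ h₂, hd.matchedF_eq hF hW h₁ h₃]
  exact StableMatching.choice_union_worse (hwsub w) (hws w) (hwc w)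
    ((hW w).choice_union_eq_or (h₂.2.1 w) (h₃.2.1 w))

/-- **Distributivity of the one-to-one stable matching lattice.**
In a one-to-one market with substitutable and consistent choice functions,
`μ₁ ⊓ (μ₂ ⊔ μ₃) = (μ₁ ⊓ μ₂) ⊔ (μ₁ ⊓ μ₃)` in the stable matching lattice. -/
theorem one_to_one_stable_matching_lattice_distributive
    {F W : Type*} [Fintype F] [Fintype W] [DecidableEq F] [DecidableEq W]
    (Cf : F → Finset W → Finset W) (Cw : W → Finset F → Finset F)
    (hfsub : ∀ f S, Cf f S ⊆ S) (hwsub : ∀ w S, Cw w S ⊆ S)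
    (hfs : ∀ f, Substitutable (Cf f)) (hfc : ∀ f, Consistent (Cf f))
    (hws : ∀ w, Substitutable (Cw w)) (hwc : ∀ w, Consistent (Cw w))
    (hone_f : ∀ f T, (Cf f T).card ≤ 1) (hone_w : ∀ w T, (Cw w T).card ≤ 1)
    (μ₁ μ₂ μ₃ a b c d e : Finset (F × W))
    (h₁ : IsStable Cf Cw μ₁) (h₂ : IsStable Cf Cw μ₂) (h₃ : IsStable Cf Cw μ₃)
    (ha : IsStableLUB Cf Cw a μ₂ μ₃)
    (hb : IsStableGLB Cf Cw b μ₁ a)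
    (hc : IsStableGLB Cf Cw c μ₁ μ₂)
    (hd : IsStableGLB Cf Cw d μ₁ μ₃)
    (he : IsStableLUB Cf Cw e c d) :
    b = e :=
  one_to_one_stable_matching_lattice_distributive_general Cf Cw hfsub hwsub hfs hfc hws hwc hone_f
    hone_w μ₁ μ₂ μ₃ a b c d e h₁ h₂ h₃ ha hb hc hd he
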